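/- Energy estimates for the high-frequency component: for every strong solution u of u'' + u' + A²u − λAu + ⟨Au,u⟩Au = f(t) and every t ≥ 0, one has F_+(t) ≥ min{1/4, (λ2−λ)/(2λ2)}·( |u_+'(t)|² + |Au_+(t)|² ), and F_+ is differentiable with F_+'(t) ≤ −γ0·F_+(t) − (1/4)|u_+'(t)|² − ((λ2−λ)/λ2)·γ0·|Au_+(t)|² + 2|f_+(t)|² − λ1·⟨Au_+(t), u_+'(t)⟩·u_-(t)² − 4γ0·I(t), where I(t) := (λ1/2)·u_-(t)²·⟨Au_+(t), u_+(t)⟩. -/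

import Mathlib

set_option maxHeartbeats 1000000

open Filter Topology Set
open scoped RealInnerProductSpace

/-- Derivative through a symmetric-operator-type difference identity, via slopes. -/
lemma aux_slope_deriv {H : Type*} [NormedAddCommGroup H] [InnerProductSpace ℝ H]
    {u w : ℝ → H} {du : H} {s : Set ℝ} {t : ℝ} {h : ℝ → ℝ}
    (hu : HasDerivWithinAt u du s t) (hw : ContinuousWithinAt w s t)
    (hsym : ∀ b ∈ s, h b - h t = ⟪u b - u t, w b + w t⟫) :
    HasDerivWithinAt h (2 * ⟪du, w t⟫) s t := by
  rw [hasDerivWithinAt_iff_tendsto_slope] at hu ⊢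
  have hw2 : Tendsto (fun b => w b + w t) (𝓝[s \ {t}] t) (𝓝 (w t + w t)) :=
    (hw.mono_left (nhdsWithin_mono t diff_subset)).add tendsto_const_nhds
  have key : Tendsto (fun b => ⟪slope u t b, w b + w t⟫) (𝓝[s \ {t}] t)
      (𝓝 ⟪du, w t + w t⟫) := hu.inner hw2
  have heq : ∀ᶠ b in 𝓝[s \ {t}] t, ⟪slope u t b, w b + w t⟫ = slope h t b := by
    filter_upwards [self_mem_nhdsWithin] with b hb
    rcases hb with ⟨hbs, _⟩
    rw [slope_def_module, slope_def_field, hsym b hbs, real_inner_smul_left]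
    ring
  have h2 : ⟪du, w t + w t⟫ = 2 * ⟪du, w t⟫ := by
    rw [inner_add_right]; ring
  rw [h2] at key
  exact key.congr' heq

/-- Coercivity inequality. -/
lemma aux_coercive (g0 l2 lam np nq nn a m : ℝ)
    (hl2 : 0 < l2) (hlam : 0 < lam) (hll : lam < l2)
    (hg0 : 0 ≤ g0) (hg18 : g0 ≤ 1/8)
    (hnp : 0 ≤ np) (hnq : 0 ≤ nq) (hnn : 0 ≤ nn)
    (ha0 : 0 ≤ a) (haQ : a ≤ nq * nn) (hgap : l2 ^ 2 * nn ^ 2 ≤ nq ^ 2)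
    (hm : -(nn * np) ≤ m) :
    min (1/4) ((l2 - lam) / (2 * l2)) * (np ^ 2 + nq ^ 2)
      ≤ (1/2) * np ^ 2 + (1/2) * nq ^ 2 - (lam/2) * a + (1/4) * a ^ 2
        + 2 * g0 * m + g0 * nn ^ 2 := by
  have hln : l2 * nn ≤ nq := by
    have h : (l2 * nn) ^ 2 ≤ nq ^ 2 := by linarith [hgap, sq_nonneg (l2*nn)]
    exact (pow_le_pow_iff_left₀ (by positivity) hnq two_ne_zero).mp h
  have hal : l2 * a ≤ nq ^ 2 := by
    calc l2 * a ≤ l2 * (nq * nn) := mul_le_mul_of_nonneg_left haQ hl2.le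
    _ = nq * (l2 * nn) := by ring
    _ ≤ nq * nq := mul_le_mul_of_nonneg_left hln hnq
    _ = nq ^ 2 := by ring
  obtain ⟨j, hj⟩ : ∃ j, j = (l2 - lam) / (2 * l2) := ⟨_, rfl⟩
  rw [← hj]
  have hl2' : l2 ≠ 0 := ne_of_gt hl2
  have hjpos : 0 < j := by
    rw [hj]; apply div_pos <;> linarith
  have hj2 : lam = (1 - 2*j) * l2 := by
    rw [hj]; field_simp; ring
  have h2j : 0 ≤ 1 - 2*j := by
    have : (l2 - lam) / (2 * l2) ≤ 1/2 := by
      rw [div_le_iff₀ (by linarith : (0:ℝ) < 2*l2)]; linarith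
    rw [hj]; linarith
  have hA : lam * a ≤ (1 - 2*j) * nq ^ 2 := by
    calc lam * a = (1 - 2*j) * (l2 * a) := by rw [hj2]; ring
    _ ≤ (1 - 2*j) * nq ^ 2 := mul_le_mul_of_nonneg_left hal h2j
  have hB : -(g0 * (nn * np)) ≤ g0 * m := by
    have := mul_le_mul_of_nonneg_left hm hg0
    linarith [this]
  have hB2 : 0 ≤ g0 * (nn - np)^2 := by positivity
  have hC : min (1/4) j * np ^ 2 ≤ (1/4) * np ^ 2 :=
    mul_le_mul_of_nonneg_right (min_le_left _ _) (sq_nonneg np)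
  have hD : min (1/4) j * nq ^ 2 ≤ j * nq ^ 2 :=
    mul_le_mul_of_nonneg_right (min_le_right _ _) (sq_nonneg nq)
  have hE : 0 ≤ a ^ 2 := sq_nonneg a
  have hP : 0 ≤ np ^ 2 := sq_nonneg np
  nlinarith [hA, hB, hB2, hC, hD, hE, hP]

/-- Main derivative inequality. -/
lemma aux_final_ineq (g0 l1 l2 lam np nq nn nf a r s m w c1 : ℝ)
    (hl2 : 0 < l2) (hlam : 0 < lam) (hll : lam < l2)
    (hg0 : 0 < g0) (hg18 : g0 ≤ 1/8) (hg2 : 8 * g0 ≤ l2 * (l2 - lam))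
    (hnp : 0 ≤ np) (hnq : 0 ≤ nq) (hnn : 0 ≤ nn) (hnf : 0 ≤ nf)
    (ha0 : 0 ≤ a) (haQ : a ≤ nq * nn) (hgap : l2 ^ 2 * nn ^ 2 ≤ nq ^ 2)
    (hr : r ≤ nf * np) (hs : s ≤ nf * nn) (hm : m ≤ nn * np) :
    -np^2 + r - l1 * c1^2 * w + 2*g0*np^2 + 2*g0*s - 2*g0*nq^2
      + 2*g0*lam*a - 2*g0*a^2 - 2*g0*l1*c1^2*a
    ≤ -g0 * ((1/2)*np^2 + (1/2)*nq^2 - (lam/2)*a + (1/4)*a^2 + 2*g0*m + g0*nn^2)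
      - (1/4)*np^2 - ((l2-lam)/l2)*g0*nq^2 + 2*nf^2
      - l1*w*c1^2 - 2*g0*l1*c1^2*a := by
  obtain ⟨k, hk⟩ : ∃ k, k = (l2 - lam) / l2 := ⟨_, rfl⟩
  rw [← hk]
  have hl2' : l2 ≠ 0 := ne_of_gt hl2
  have hkpos : 0 < k := by rw [hk]; exact div_pos (by linarith) hl2
  have hk1 : lam = (1 - k) * l2 := by rw [hk]; field_simp; ring
  have h1k : 0 ≤ 1 - k := by
    have : (l2 - lam) / l2 ≤ 1 := by rw [div_le_one hl2]; linarith
    rw [hk]; linarith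
  have hln : l2 * nn ≤ nq := by
    have h : (l2 * nn) ^ 2 ≤ nq ^ 2 := by linarith [hgap, sq_nonneg (l2*nn)]
    exact (pow_le_pow_iff_left₀ (by positivity) hnq two_ne_zero).mp h
  have hal : l2 * a ≤ nq ^ 2 := by
    calc l2 * a ≤ l2 * (nq * nn) := mul_le_mul_of_nonneg_left haQ hl2.le
    _ = nq * (l2 * nn) := by ring
    _ ≤ nq * nq := mul_le_mul_of_nonneg_left hln hnq
    _ = nq ^ 2 := by ring
  -- bound r
  have h1 : r ≤ nf^2 + (1/4)*np^2 := by linarith [hr, sq_nonneg (nf - np/2)]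
  -- bound 2 g0 s
  have h2 : 2*g0*s ≤ nf^2 + g0^2*nn^2 := by
    have h2a : 2*g0*s ≤ 2*g0*(nf*nn) := mul_le_mul_of_nonneg_left hs (by linarith)
    linarith [h2a, sq_nonneg (nf - g0*nn)]
  -- bound 2 g0^2 m
  have h3 : 2*g0^2*m ≤ g0^2*nn^2 + g0^2*np^2 := by
    have h3a : 2*g0^2*m ≤ 2*g0^2*(nn*np) :=
      mul_le_mul_of_nonneg_left hm (by positivity)
    linarith [h3a, sq_nonneg (g0*nn - g0*np)]
  have h5 : 0 ≤ g0 * a^2 := by positivity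
  -- 6 g0 nn^2 ≤ k nq^2
  have hg6 : 6 * g0 ≤ k * l2^2 := by
    have hkl : k * l2^2 = (l2 - lam) * l2 := by rw [hk]; field_simp
    rw [hkl]; nlinarith [hg2, hg0.le]
  have h6 : 6*g0*nn^2 ≤ k*nq^2 := by
    have hx : (6*g0) * (l2^2*nn^2) ≤ (k*l2^2) * nq^2 :=
      mul_le_mul hg6 hgap (by positivity) (by positivity)
    have hl22 : 0 < l2^2 := by positivity
    have hy : l2^2*(6*g0*nn^2) ≤ l2^2*(k*nq^2) := by linarith [hx]
    exact le_of_mul_le_mul_left hy hl22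
  have h7 : 3*g0^2*nn^2 ≤ (g0/2)*(k*nq^2) := by
    have := mul_le_mul_of_nonneg_left h6 (by positivity : (0:ℝ) ≤ g0/2)
    linarith [this]
  -- bound (3/2) g0 lam a
  have h8 : (3/2)*g0*(lam*a) ≤ (3/2)*g0*((1-k)*nq^2) := by
    have hla : lam * a ≤ (1-k)*nq^2 := by
      calc lam * a = (1-k)*(l2*a) := by rw [hk1]; ring
      _ ≤ (1-k)*nq^2 := mul_le_mul_of_nonneg_left hal h1k
    have := mul_le_mul_of_nonneg_left hla (by positivity : (0:ℝ) ≤ (3/2)*g0)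
    linarith
  have h10 : (-(1/2) + (5/2)*g0 + g0^2) * np^2 ≤ 0 := by
    have e1 : g0*np^2 ≤ (1/8)*np^2 := mul_le_mul_of_nonneg_right hg18 (sq_nonneg np)
    have eg : g0^2 ≤ (1/64) := by nlinarith [hg0.le, hg18]
    have e2 : g0^2*np^2 ≤ (1/64)*np^2 := mul_le_mul_of_nonneg_right eg (sq_nonneg np)
    have e0 : 0 ≤ np^2 := sq_nonneg np
    nlinarith [e1, e2, e0]
  linarith [h1, h2, h3, h5, h7, h8, h10]

/-- `u` (with derivatives `u'`, `u''`) is a strong solution on `[0,∞)` of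
`u'' + u' + A²u - λAu + ⟪Au,u⟫Au = f(t)`. -/
def IsStrongSolution {H : Type*} [NormedAddCommGroup H] [InnerProductSpace ℝ H]
    (D : Submodule ℝ H) (A : H →ₗ[ℝ] H) (lam : ℝ)
    (f u u' u'' : ℝ → H) : Prop :=
  (∀ t ∈ Ici (0:ℝ), HasDerivWithinAt u (u' t) (Ici 0) t) ∧
  (∀ t ∈ Ici (0:ℝ), HasDerivWithinAt u' (u'' t) (Ici 0) t) ∧
  ContinuousOn u'' (Ici 0) ∧
  (∀ t ∈ Ici (0:ℝ), u t ∈ D) ∧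
  (∀ t ∈ Ici (0:ℝ), A (u t) ∈ D) ∧
  ContinuousOn (fun t => A (u t)) (Ici 0) ∧
  (∀ t ∈ Ici (0:ℝ),
    u'' t + u' t + A (A (u t)) - lam • A (u t) + ⟪A (u t), u t⟫ • A (u t) = f t)

/-- Energy estimates for the high-frequency component. -/
theorem high_frequency_energy_estimates
    {H : Type*} [NormedAddCommGroup H] [InnerProductSpace ℝ H] [CompleteSpace H]
    (D : Submodule ℝ H) (hD : Dense (D : Set H))
    (A : H →ₗ[ℝ] H)
    (hsym : ∀ x ∈ D, ∀ y ∈ D, ⟪A x, y⟫ = ⟪x, A y⟫)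
    (hpos : ∀ x ∈ D, 0 ≤ ⟪A x, x⟫)
    (l1 l2 lam : ℝ) (hl1 : 0 < l1) (hl12 : l1 < l2)
    (hlam1 : l1 < lam) (hlam2 : lam < l2)
    (e1 : H) (he1D : e1 ∈ D) (he1 : ‖e1‖ = 1) (hAe1 : A e1 = l1 • e1)
    (hgap : ∀ x ∈ D, ⟪x, e1⟫ = 0 → l2 ^ 2 * ‖x‖ ^ 2 ≤ ‖A x‖ ^ 2)
    (γ0 : ℝ) (hγ0 : γ0 = (1/8) * min 1 (min (l1 * (lam - l1)) (l2 * (l2 - lam))))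
    (f : ℝ → H) (hfc : ContinuousOn f (Ici 0))
    (hfb : ∃ C, ∀ t ∈ Ici (0:ℝ), ‖f t‖ ≤ C)
    (u u' u'' : ℝ → H) (hu : IsStrongSolution D A lam f u u' u'')
    (up upd fp : ℝ → H)
    (hup : ∀ t, up t = u t - ⟪u t, e1⟫ • e1)
    (hupd : ∀ t, upd t = u' t - ⟪u' t, e1⟫ • e1)
    (hfp : ∀ t, fp t = f t - ⟪f t, e1⟫ • e1)
    (Fp Iq : ℝ → ℝ)
    (hFp : ∀ t, Fp t =
      (1/2) * ‖upd t‖ ^ 2 + (1/2) * ‖A (up t)‖ ^ 2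
        - (lam/2) * ⟪A (up t), up t⟫ + (1/4) * ⟪A (up t), up t⟫ ^ 2
        + 2 * γ0 * ⟪up t, upd t⟫ + γ0 * ‖up t‖ ^ 2)
    (hIq : ∀ t, Iq t = (l1 / 2) * ⟪u t, e1⟫ ^ 2 * ⟪A (up t), up t⟫) :
    (∀ t ∈ Ici (0:ℝ),
      min (1/4) ((l2 - lam) / (2 * l2)) * (‖upd t‖ ^ 2 + ‖A (up t)‖ ^ 2)
        ≤ Fp t) ∧
    ∃ Fp' : ℝ → ℝ, ∀ t ∈ Ici (0:ℝ),
      HasDerivWithinAt Fp (Fp' t) (Ici 0) t ∧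
      Fp' t ≤ -γ0 * Fp t - (1/4) * ‖upd t‖ ^ 2
        - ((l2 - lam) / l2) * γ0 * ‖A (up t)‖ ^ 2 + 2 * ‖fp t‖ ^ 2
        - l1 * ⟪A (up t), upd t⟫ * ⟪u t, e1⟫ ^ 2 - 4 * γ0 * Iq t := by
  obtain ⟨hu1, hu2, hu''c, huD, hAuD, hAuc, heqn⟩ := hu
  have hl20 : 0 < l2 := hl1.trans hl12
  have hlam0 : 0 < lam := hl1.trans hlam1
  -- γ0 facts
  have hmin_pos : 0 < min 1 (min (l1 * (lam - l1)) (l2 * (l2 - lam))) := by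
    apply lt_min one_pos
    apply lt_min
    · exact mul_pos hl1 (by linarith)
    · exact mul_pos hl20 (by linarith)
  have hg0pos : 0 < γ0 := by
    rw [hγ0]; exact mul_pos (by norm_num) hmin_pos
  have hg18 : γ0 ≤ 1/8 := by
    rw [hγ0]
    have h := min_le_left 1 (min (l1 * (lam - l1)) (l2 * (l2 - lam)))
    linarith
  have hg2 : 8 * γ0 ≤ l2 * (l2 - lam) := by
    rw [hγ0]
    have h := (min_le_right 1 (min (l1 * (lam - l1)) (l2 * (l2 - lam)))).trans
      (min_le_right (l1 * (lam - l1)) (l2 * (l2 - lam)))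
    linarith
  have hee : ⟪e1, e1⟫ = (1:ℝ) := by
    rw [real_inner_self_eq_norm_sq, he1]; norm_num
  -- basic facts about the projection
  have hAue1 : ∀ t ∈ Ici (0:ℝ), ⟪A (u t), e1⟫ = l1 * ⟪u t, e1⟫ := fun t ht => by
    rw [hsym (u t) (huD t ht) e1 he1D, hAe1, real_inner_smul_right]
  have upD : ∀ t ∈ Ici (0:ℝ), up t ∈ D := fun t ht => by
    rw [hup]; exact sub_mem (huD t ht) (Submodule.smul_mem _ _ he1D)
  have hAup : ∀ t ∈ Ici (0:ℝ), A (up t) = A (u t) - (l1 * ⟪u t, e1⟫) • e1 :=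
    fun t ht => by
      rw [hup, map_sub, map_smul, hAe1, smul_smul, mul_comm]
  have AupD : ∀ t ∈ Ici (0:ℝ), A (up t) ∈ D := fun t ht => by
    rw [hAup t ht]; exact sub_mem (hAuD t ht) (Submodule.smul_mem _ _ he1D)
  have up_orth : ∀ t, ⟪up t, e1⟫ = 0 := fun t => by
    rw [hup, inner_sub_left, real_inner_smul_left, hee]; ring
  -- scalar expansion identities
  have I4 : ∀ t, ‖upd t‖ ^ 2 = ‖u' t‖ ^ 2 - ⟪u' t, e1⟫ ^ 2 := fun t => by
    have hns : ‖⟪u' t, e1⟫ • e1‖ ^ 2 = ⟪u' t, e1⟫ ^ 2 := by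
      rw [norm_smul, he1, mul_one, Real.norm_eq_abs, sq_abs]
    rw [hupd, norm_sub_sq_real, real_inner_smul_right, hns]; ring
  have I5 : ∀ t, ‖up t‖ ^ 2 = ‖u t‖ ^ 2 - ⟪u t, e1⟫ ^ 2 := fun t => by
    have hns : ‖⟪u t, e1⟫ • e1‖ ^ 2 = ⟪u t, e1⟫ ^ 2 := by
      rw [norm_smul, he1, mul_one, Real.norm_eq_abs, sq_abs]
    rw [hup, norm_sub_sq_real, real_inner_smul_right, hns]; ring
  have I2 : ∀ t ∈ Ici (0:ℝ), ‖A (up t)‖ ^ 2 = ‖A (u t)‖ ^ 2 - l1 ^ 2 * ⟪u t, e1⟫ ^ 2 :=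
    fun t ht => by
      have hns : ‖(l1 * ⟪u t, e1⟫) • e1‖ ^ 2 = (l1 * ⟪u t, e1⟫) ^ 2 := by
        rw [norm_smul, he1, mul_one, Real.norm_eq_abs, sq_abs]
      rw [hAup t ht, norm_sub_sq_real, real_inner_smul_right, hAue1 t ht, hns]; ring
  have I3 : ∀ t ∈ Ici (0:ℝ), ⟪A (up t), up t⟫ = ⟪A (u t), u t⟫ - l1 * ⟪u t, e1⟫ ^ 2 :=
    fun t ht => by
      have hcm : ⟪e1, u t⟫ = ⟪u t, e1⟫ := real_inner_comm _ _
      rw [hAup t ht, hup t]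
      simp only [inner_sub_left, inner_sub_right,
        real_inner_smul_left, real_inner_smul_right, hee, hAue1 t ht, hcm]
      ring
  have I6 : ∀ t, ⟪up t, upd t⟫ = ⟪u t, u' t⟫ - ⟪u t, e1⟫ * ⟪u' t, e1⟫ := fun t => by
    have hcm : ⟪e1, u' t⟫ = ⟪u' t, e1⟫ := real_inner_comm _ _
    rw [hup t, hupd t]
    simp only [inner_sub_left, inner_sub_right,
      real_inner_smul_left, real_inner_smul_right, hee, hcm]
    ring
  have I7 : ∀ t ∈ Ici (0:ℝ),
      ⟪A (up t), upd t⟫ = ⟪A (u t), u' t⟫ - l1 * ⟪u t, e1⟫ * ⟪u' t, e1⟫ :=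
    fun t ht => by
      have hcm : ⟪e1, u' t⟫ = ⟪u' t, e1⟫ := real_inner_comm _ _
      rw [hAup t ht, hupd t]
      simp only [inner_sub_left, inner_sub_right,
        real_inner_smul_left, real_inner_smul_right, hee, hAue1 t ht, hcm]
      ring
  have I8 : ∀ t, ⟪up t, fp t⟫ = ⟪u t, f t⟫ - ⟪u t, e1⟫ * ⟪f t, e1⟫ := fun t => by
    have hcm : ⟪e1, f t⟫ = ⟪f t, e1⟫ := real_inner_comm _ _
    rw [hup t, hfp t]
    simp only [inner_sub_left, inner_sub_right,
      real_inner_smul_left, real_inner_smul_right, hee, hcm]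
    ring
  have I9 : ∀ t, ⟪fp t, upd t⟫ = ⟪f t, u' t⟫ - ⟪f t, e1⟫ * ⟪u' t, e1⟫ := fun t => by
    have hcm : ⟪e1, u' t⟫ = ⟪u' t, e1⟫ := real_inner_comm _ _
    rw [hfp t, hupd t]
    simp only [inner_sub_left, inner_sub_right,
      real_inner_smul_left, real_inner_smul_right, hee, hcm]
    ring
  -- continuity facts
  have hu'cont : ContinuousOn u' (Ici 0) := fun t ht => (hu2 t ht).continuousWithinAt
  have hucont : ContinuousOn u (Ici 0) := fun t ht => (hu1 t ht).continuousWithinAt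
  have hbcont : ContinuousOn (fun t => ⟪A (u t), u t⟫) (Ici 0) := hAuc.inner hucont
  have hA2eq : ∀ t ∈ Ici (0:ℝ), A (A (u t)) =
      f t - u'' t - u' t + lam • A (u t) - ⟪A (u t), u t⟫ • A (u t) := fun t ht => by
    rw [← heqn t ht]; abel
  have hA2cont : ContinuousOn (fun t => A (A (u t))) (Ici 0) := by
    apply ContinuousOn.congr
      (((((hfc.sub hu''c).sub hu'cont).add (hAuc.const_smul lam)).sub
        (hbcont.smul hAuc)))
    exact fun t ht => hA2eq t ht
  constructor
  · -- coercivity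
    intro t ht
    rw [hFp t]
    have habs := abs_real_inner_le_norm (up t) (upd t)
    exact aux_coercive γ0 l2 lam (‖upd t‖) (‖A (up t)‖) (‖up t‖) _ _
      hl20 hlam0 hlam2 hg0pos.le hg18 (norm_nonneg _) (norm_nonneg _) (norm_nonneg _)
      (hpos _ (upD t ht)) (real_inner_le_norm _ _)
      (hgap (up t) (upD t ht) (up_orth t))
      (by linarith [neg_abs_le ⟪up t, upd t⟫, habs])
  · -- derivative part
    refine ⟨fun t => -‖upd t‖^2 + ⟪fp t, upd t⟫
      - l1 * ⟪u t, e1⟫^2 * ⟪A (up t), upd t⟫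
      + 2*γ0*‖upd t‖^2 + 2*γ0*⟪up t, fp t⟫ - 2*γ0*‖A (up t)‖^2
      + 2*γ0*lam*⟪A (up t), up t⟫ - 2*γ0*⟪A (up t), up t⟫^2
      - 2*γ0*l1*⟪u t, e1⟫^2*⟪A (up t), up t⟫, fun t ht => ?_⟩
    -- individual derivatives
    have d1 : HasDerivWithinAt (fun x => ‖u' x‖ ^ 2) (2*⟪u'' t, u' t⟫) (Ici 0) t := by
      have d1' := (hu2 t ht).inner ℝ (hu2 t ht)
      have hfe : ∀ x : H, ⟪x, x⟫ = ‖x‖ ^ 2 := fun x => real_inner_self_eq_norm_sq x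
      simp only [hfe] at d1'
      refine d1'.congr_deriv ?_
      rw [real_inner_comm (u' t) (u'' t)]; ring
    have d2 : HasDerivWithinAt (fun x => ⟪u' x, e1⟫) (⟪u'' t, e1⟫) (Ici 0) t := by
      have := (hu2 t ht).inner ℝ (hasDerivWithinAt_const t (Ici (0:ℝ)) e1)
      simpa using this
    have d4 : HasDerivWithinAt (fun x => ⟪u x, e1⟫) (⟪u' t, e1⟫) (Ici 0) t := by
      have := (hu1 t ht).inner ℝ (hasDerivWithinAt_const t (Ici (0:ℝ)) e1)
      simpa using this
    have d6 : HasDerivWithinAt (fun x => ⟪u x, u' x⟫)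
        (⟪u t, u'' t⟫ + ⟪u' t, u' t⟫) (Ici 0) t := (hu1 t ht).inner ℝ (hu2 t ht)
    have d7 : HasDerivWithinAt (fun x => ‖u x‖ ^ 2) (2*⟪u' t, u t⟫) (Ici 0) t := by
      have d7' := (hu1 t ht).inner ℝ (hu1 t ht)
      have hfe : ∀ x : H, ⟪x, x⟫ = ‖x‖ ^ 2 := fun x => real_inner_self_eq_norm_sq x
      simp only [hfe] at d7'
      refine d7'.congr_deriv ?_
      rw [real_inner_comm (u t) (u' t)]; ring
    have d3 : HasDerivWithinAt (fun x => ‖A (u x)‖ ^ 2)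
        (2*⟪u' t, A (A (u t))⟫) (Ici 0) t := by
      apply aux_slope_deriv (hu1 t ht) (hA2cont t ht)
      intro b hb
      have hsy : ⟪u b - u t, A (A (u b)) + A (A (u t))⟫
          = ⟪A (u b - u t), A (u b) + A (u t)⟫ := by
        rw [← map_add]
        exact (hsym (u b - u t) (sub_mem (huD b hb) (huD t ht))
          (A (u b) + A (u t)) (add_mem (hAuD b hb) (hAuD t ht))).symm
      rw [hsy, map_sub, inner_sub_left, inner_add_right, inner_add_right,
        real_inner_self_eq_norm_sq, real_inner_self_eq_norm_sq,
        real_inner_comm (A (u t)) (A (u b))]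
      ring
    have d5 : HasDerivWithinAt (fun x => ⟪A (u x), u x⟫)
        (2*⟪u' t, A (u t)⟫) (Ici 0) t := by
      apply aux_slope_deriv (hu1 t ht) (hAuc t ht)
      intro b hb
      have hx : ⟪u t, A (u b)⟫ = ⟪u b, A (u t)⟫ := by
        rw [real_inner_comm, hsym (u b) (huD b hb) (u t) (huD t ht)]
      rw [inner_sub_left, inner_add_right, inner_add_right,
        real_inner_comm (A (u b)) (u b), real_inner_comm (A (u t)) (u t), hx]
      ring
    -- squared/compound derivatives
    have d2sq : HasDerivWithinAt (fun x => ⟪u' x, e1⟫ ^ 2)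
        (2*⟪u' t, e1⟫*⟪u'' t, e1⟫) (Ici 0) t := by
      have := d2.pow 2; norm_num at this; refine this.congr_deriv ?_; ring
    have d4sq : HasDerivWithinAt (fun x => ⟪u x, e1⟫ ^ 2)
        (2*⟪u t, e1⟫*⟪u' t, e1⟫) (Ici 0) t := by
      have := d4.pow 2; norm_num at this; refine this.congr_deriv ?_; ring
    have d5a : HasDerivWithinAt (fun x => ⟪A (u x), u x⟫ - l1*⟪u x, e1⟫ ^ 2)
        (2*⟪u' t, A (u t)⟫ - l1*(2*⟪u t, e1⟫*⟪u' t, e1⟫)) (Ici 0) t :=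
      d5.sub (d4sq.const_mul l1)
    have d5sq : HasDerivWithinAt (fun x => (⟪A (u x), u x⟫ - l1*⟪u x, e1⟫ ^ 2) ^ 2)
        (2*(⟪A (u t), u t⟫ - l1*⟪u t, e1⟫ ^ 2)
          * (2*⟪u' t, A (u t)⟫ - l1*(2*⟪u t, e1⟫*⟪u' t, e1⟫))) (Ici 0) t := by
      have := d5a.pow 2; norm_num at this; refine this.congr_deriv ?_; ring
    -- assemble G
    have hG : HasDerivWithinAt (fun x =>
        (1/2)*(‖u' x‖ ^ 2 - ⟪u' x, e1⟫ ^ 2)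
        + (1/2)*(‖A (u x)‖ ^ 2 - l1 ^ 2 * ⟪u x, e1⟫ ^ 2)
        - (lam/2)*(⟪A (u x), u x⟫ - l1*⟪u x, e1⟫ ^ 2)
        + (1/4)*((⟪A (u x), u x⟫ - l1*⟪u x, e1⟫ ^ 2) ^ 2)
        + (2*γ0)*(⟪u x, u' x⟫ - ⟪u x, e1⟫*⟪u' x, e1⟫)
        + γ0*(‖u x‖ ^ 2 - ⟪u x, e1⟫ ^ 2))
        ( (1/2)*(2*⟪u'' t, u' t⟫ - 2*⟪u' t, e1⟫*⟪u'' t, e1⟫)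
        + (1/2)*(2*⟪u' t, A (A (u t))⟫ - l1 ^ 2 * (2*⟪u t, e1⟫*⟪u' t, e1⟫))
        - (lam/2)*(2*⟪u' t, A (u t)⟫ - l1*(2*⟪u t, e1⟫*⟪u' t, e1⟫))
        + (1/4)*(2*(⟪A (u t), u t⟫ - l1*⟪u t, e1⟫ ^ 2)
            * (2*⟪u' t, A (u t)⟫ - l1*(2*⟪u t, e1⟫*⟪u' t, e1⟫)))
        + (2*γ0)*((⟪u t, u'' t⟫ + ⟪u' t, u' t⟫)
            - (⟪u' t, e1⟫*⟪u' t, e1⟫ + ⟪u t, e1⟫*⟪u'' t, e1⟫))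
        + γ0*(2*⟪u' t, u t⟫ - 2*⟪u t, e1⟫*⟪u' t, e1⟫) ) (Ici 0) t := by
      exact ((((((d1.sub d2sq).const_mul (1/2)).add
        ((d3.sub (d4sq.const_mul (l1 ^ 2))).const_mul (1/2))).sub
        (d5a.const_mul (lam/2))).add
        (d5sq.const_mul (1/4))).add
        ((d6.sub (d4.mul d2)).const_mul (2*γ0))).add
        ((d7.sub d4sq).const_mul γ0)
    -- Fp agrees with G on Ici 0
    have hcongr : ∀ x ∈ Ici (0:ℝ), Fp x =
        (1/2)*(‖u' x‖ ^ 2 - ⟪u' x, e1⟫ ^ 2)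
        + (1/2)*(‖A (u x)‖ ^ 2 - l1 ^ 2 * ⟪u x, e1⟫ ^ 2)
        - (lam/2)*(⟪A (u x), u x⟫ - l1*⟪u x, e1⟫ ^ 2)
        + (1/4)*((⟪A (u x), u x⟫ - l1*⟪u x, e1⟫ ^ 2) ^ 2)
        + (2*γ0)*(⟪u x, u' x⟫ - ⟪u x, e1⟫*⟪u' x, e1⟫)
        + γ0*(‖u x‖ ^ 2 - ⟪u x, e1⟫ ^ 2) := fun x hx => by
      rw [hFp x, I4 x, I2 x hx, I3 x hx, I6 x, I5 x]
      try ring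
    have hFpd := (hG.congr hcongr (hcongr t ht))
    -- scalar consequences of the equation at t
    have heqt := heqn t ht
    have eq1 : ⟪u'' t, u' t⟫ = ⟪f t, u' t⟫ - ⟪u' t, u' t⟫ - ⟪u' t, A (A (u t))⟫
        + lam*⟪u' t, A (u t)⟫ - ⟪A (u t), u t⟫*⟪u' t, A (u t)⟫ := by
      have h2 : ⟪u'' t + u' t + A (A (u t)) - lam • A (u t)
          + ⟪A (u t), u t⟫ • A (u t), u' t⟫ = ⟪f t, u' t⟫ := by rw [heqt]
      simp only [inner_add_left, inner_sub_left, real_inner_smul_left] at h2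
      rw [real_inner_comm (u' t) (A (A (u t))), real_inner_comm (u' t) (A (u t))] at h2
      linarith [h2]
    have esym2 : ⟪u t, A (A (u t))⟫ = ‖A (u t)‖ ^ 2 := by
      rw [← hsym (u t) (huD t ht) (A (u t)) (hAuD t ht), real_inner_self_eq_norm_sq]
    have eq2 : ⟪u t, u'' t⟫ = ⟪u t, f t⟫ - ⟪u t, u' t⟫ - ‖A (u t)‖ ^ 2
        + lam*⟪A (u t), u t⟫ - ⟪A (u t), u t⟫ ^ 2 := by
      have h2 : ⟪u t, u'' t + u' t + A (A (u t)) - lam • A (u t)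
          + ⟪A (u t), u t⟫ • A (u t)⟫ = ⟪u t, f t⟫ := by rw [heqt]
      simp only [inner_add_right, inner_sub_right, real_inner_smul_right] at h2
      rw [esym2, real_inner_comm (A (u t)) (u t)] at h2
      nlinarith [h2]
    have esym3 : ⟪A (A (u t)), e1⟫ = l1 ^ 2 * ⟪u t, e1⟫ := by
      rw [hsym (A (u t)) (hAuD t ht) e1 he1D, hAe1, real_inner_smul_right,
        hAue1 t ht]
      ring
    have eq3 : ⟪u'' t, e1⟫ = ⟪f t, e1⟫ - ⟪u' t, e1⟫ - l1 ^ 2 * ⟪u t, e1⟫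
        + lam*(l1*⟪u t, e1⟫) - ⟪A (u t), u t⟫*(l1*⟪u t, e1⟫) := by
      have h2 : ⟪u'' t + u' t + A (A (u t)) - lam • A (u t)
          + ⟪A (u t), u t⟫ • A (u t), e1⟫ = ⟪f t, e1⟫ := by rw [heqt]
      simp only [inner_add_left, inner_sub_left, real_inner_smul_left] at h2
      rw [esym3, hAue1 t ht] at h2
      linarith [h2]
    -- derivative value equality
    have hval : ( (1/2)*(2*⟪u'' t, u' t⟫ - 2*⟪u' t, e1⟫*⟪u'' t, e1⟫)
        + (1/2)*(2*⟪u' t, A (A (u t))⟫ - l1 ^ 2 * (2*⟪u t, e1⟫*⟪u' t, e1⟫))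
        - (lam/2)*(2*⟪u' t, A (u t)⟫ - l1*(2*⟪u t, e1⟫*⟪u' t, e1⟫))
        + (1/4)*(2*(⟪A (u t), u t⟫ - l1*⟪u t, e1⟫ ^ 2)
            * (2*⟪u' t, A (u t)⟫ - l1*(2*⟪u t, e1⟫*⟪u' t, e1⟫)))
        + (2*γ0)*((⟪u t, u'' t⟫ + ⟪u' t, u' t⟫)
            - (⟪u' t, e1⟫*⟪u' t, e1⟫ + ⟪u t, e1⟫*⟪u'' t, e1⟫))
        + γ0*(2*⟪u' t, u t⟫ - 2*⟪u t, e1⟫*⟪u' t, e1⟫) )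
        = -‖upd t‖^2 + ⟪fp t, upd t⟫
          - l1 * ⟪u t, e1⟫^2 * ⟪A (up t), upd t⟫
          + 2*γ0*‖upd t‖^2 + 2*γ0*⟪up t, fp t⟫ - 2*γ0*‖A (up t)‖^2
          + 2*γ0*lam*⟪A (up t), up t⟫ - 2*γ0*⟪A (up t), up t⟫^2
          - 2*γ0*l1*⟪u t, e1⟫^2*⟪A (up t), up t⟫ := by
      rw [eq1, eq2, eq3, I9 t, I7 t ht, I2 t ht, I3 t ht, I8 t, I4 t]
      rw [real_inner_comm (u' t) (A (u t)), real_inner_comm (u t) (u' t),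
        real_inner_self_eq_norm_sq (u' t)]
      ring
    refine ⟨?_, ?_⟩
    · rw [hval] at hFpd; exact hFpd
    -- the inequality
    rw [hFp t, hIq t]
    have habs := abs_real_inner_le_norm (up t) (upd t)
    have := aux_final_ineq γ0 l1 l2 lam (‖upd t‖) (‖A (up t)‖) (‖up t‖) (‖fp t‖)
      (⟪A (up t), up t⟫) (⟪fp t, upd t⟫) (⟪up t, fp t⟫) (⟪up t, upd t⟫)
      (⟪A (up t), upd t⟫) (⟪u t, e1⟫)
      hl20 hlam0 hlam2 hg0pos hg18 hg2
      (norm_nonneg _) (norm_nonneg _) (norm_nonneg _) (norm_nonneg _)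
      (hpos _ (upD t ht)) (real_inner_le_norm _ _)
      (hgap (up t) (upD t ht) (up_orth t))
      (real_inner_le_norm (fp t) (upd t))
      (le_of_le_of_eq (real_inner_le_norm (up t) (fp t)) (mul_comm _ _))
      (by linarith [le_abs_self ⟪up t, upd t⟫, habs])
    linarith [this]
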